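/- For two rungs of two qubits each, with t and b legs, let R = (1/2)(|↑↓⟩−|↓↑⟩)(⟨↑↓|−⟨↓↑|) and |ι⟩ = (|↑↑⟩+|↓↓⟩)/√2 on a rung. If a vector v ∈ (C²⊗C²)⊗(C²⊗C²) satisfies (1 − |ι⟩⟨ι|)_{rung 1} v = 0 and R_{leg t} v = 0, where R_{leg t} acts on the two t-leg qubits, then v = 0. -/
import Mathlib


namespace ComKerLemma

noncomputable section

/-- The rung state `|ι⟩ = (|↑↑⟩ + |↓↓⟩)/√2` pairing the `t` and `b` qubits of a rung. -/
def iota : Fin 2 × Fin 2 → ℂ := fun r => if r.1 = r.2 then ((Real.sqrt 2)⁻¹ : ℂ) else 0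

/-- Amplitudes of the two-qubit singlet `|↑↓⟩ − |↓↑⟩`. -/
def dAmp : Fin 2 → Fin 2 → ℂ := fun a b =>
  if a = 0 ∧ b = 1 then 1 else if a = 1 ∧ b = 0 then -1 else 0

/-- On two rungs of two qubits each, if `v` is fixed by the projector `|ι⟩⟨ι|` on rung 1
(i.e. `(1 − |ι⟩⟨ι|)_{rung 1} v = 0`) and annihilated by the singlet projector
`R = (1/2)(|↑↓⟩−|↓↑⟩)(⟨↑↓|−⟨↓↑|)` acting on the two `t`-leg qubits, then `v = 0`:
the common kernel is trivial. -/
theorem common_kernel_trivial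
    (v : (Fin 2 × Fin 2) × (Fin 2 × Fin 2) → ℂ)
    (h1 : ∀ r1 r2, v (r1, r2) = iota r1 * ∑ r1', star (iota r1') * v (r1', r2))
    (h2 : ∀ r1 r2 : Fin 2 × Fin 2,
      (1 / 2 : ℂ) * dAmp r1.1 r2.1 *
        (∑ a, ∑ b, dAmp a b * v ((a, r1.2), (b, r2.2))) = 0) :
    v = 0 := by
  have hs : ((Real.sqrt 2)⁻¹ : ℂ) ≠ 0 := by
    simp only [ne_eq, inv_eq_zero, Complex.ofReal_eq_zero]
    positivity
  set w : Fin 2 × Fin 2 → ℂ := fun r2 => ∑ r1', star (iota r1') * v (r1', r2) with hw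
  have hv : ∀ r1 r2, v (r1, r2) = iota r1 * w r2 := h1
  have hS : ∀ b1 b2 : Fin 2, w ((if b1 = 0 then 1 else 0), b2) = 0 := by
    intro b1 b2
    have h := h2 (0, b1) (1, b2)
    simp only [dAmp, Fin.sum_univ_two] at h
    rw [hv, hv, hv, hv] at h
    fin_cases b1 <;>
      · simp only [iota, Prod.ext_iff] at h
        norm_num at h
        simpa using h
  have hw0 : ∀ r2, w r2 = 0 := by
    rintro ⟨b, b2⟩
    fin_cases b
    · simpa using hS 1 b2
    · simpa using hS 0 b2
  funext ⟨r1, r2⟩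
  simp [hv r1 r2, hw0 r2]

end

end ComKerLemma
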